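/- arXiv:2407.05039 — 2 statements merged into one kernel-verified Lean document; each statement's English description precedes it below -/
import Mathlib

section
/- Let Ω ⊂ ℝⁿ satisfy the visibility property at 0 ∈ ∂Ω. Then the tangent cone to Ω at 0 exists: setting Ω_s = s⁻¹Ω for s > 0, there is an open cone Ω₀ with vertex 0 (the epigraph of the 1-homogeneous function ω₀(x') = |x'| D⁺_{x'/|x'|}ω(0) of one-sided radial derivatives of the graph function ω) such that lim_{s→0⁺} dist_H(Ω_s ∩ B_R, Ω₀ ∩ B_R) = 0 for every R > 0. -/
open MeasureTheory Metric Set Filter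
open scoped Topology ENNReal NNReal RealInnerProductSpace

noncomputable section

abbrev Eucl (n : ℕ) : Type := EuclideanSpace ℝ (Fin n)

/-- Divergence of a vector field on `Eucl n`. -/
def diverg {n : ℕ} (Φ : Eucl n → Eucl n) (x : Eucl n) : ℝ :=
  ∑ i, fderiv ℝ Φ x (EuclideanSpace.single i 1) i

/-- Total variation `|Df|(U)` of `f` on the set `U`, defined by duality with
compactly supported `C¹` vector fields bounded by one. -/
def totalVariation {n : ℕ} (f : Eucl n → ℝ) (U : Set (Eucl n)) : ℝ≥0∞ :=
  ⨆ Φ : {Φ : Eucl n → Eucl n // ContDiff ℝ 1 Φ ∧ HasCompactSupport Φ ∧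
      tsupport Φ ⊆ U ∧ ∀ x, ‖Φ x‖ ≤ 1},
    ENNReal.ofReal (∫ x in U, f x * diverg Φ.1 x)

/-- `f ∈ BV(U)`: `f` is integrable on `U` with finite total variation in `U`. -/
def MemBV {n : ℕ} (f : Eucl n → ℝ) (U : Set (Eucl n)) : Prop :=
  IntegrableOn f U volume ∧ totalVariation f U < ⊤

/-- `f ∈ BV_loc(Ω)`: `f ∈ BV(Ω ∩ A)` for every bounded open set `A ⊆ ℝⁿ`. -/
def MemBVloc {n : ℕ} (f : Eucl n → ℝ) (Ω : Set (Eucl n)) : Prop :=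
  ∀ A : Set (Eucl n), IsOpen A → Bornology.IsBounded A → MemBV f (Ω ∩ A)

/-- Perimeter `P(E;U) = |D1_E|(U)` of a set `E` in `U`. -/
def perim {n : ℕ} (E U : Set (Eucl n)) : ℝ≥0∞ :=
  totalVariation (Set.indicator E fun _ => (1 : ℝ)) U

/-- `K ⊂⊂ A` : `K` is compactly contained in `A`. -/
def CptIn {n : ℕ} (K A : Set (Eucl n)) : Prop :=
  IsCompact (closure K) ∧ closure K ⊆ A

/-- The minimality gap `Ψ_Ω(f;A)` of a function `f` in `A`, relative to `Ω`. -/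
def minGap {n : ℕ} (Ω A : Set (Eucl n)) (f : Eucl n → ℝ) : ℝ≥0∞ :=
  totalVariation f (Ω ∩ A) -
    ⨅ g : {g : Eucl n → ℝ // MemBVloc g Ω ∧ CptIn (tsupport (g - f)) A},
      totalVariation g.1 (Ω ∩ A)

/-- The minimality gap `Ψ_Ω(E;A)` of a set `E` in `A`, relative to `Ω`. -/
def minGapSet {n : ℕ} (Ω A E : Set (Eucl n)) : ℝ≥0∞ :=
  minGap Ω A (Set.indicator E fun _ => (1 : ℝ))

/-- The point `(x', t) ∈ ℝ^{n+1}` obtained by appending the coordinate `t` to `x' ∈ ℝⁿ`. -/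
def snocE {n : ℕ} (x' : Eucl n) (t : ℝ) : Eucl (n+1) :=
  (EuclideanSpace.equiv (Fin (n+1)) ℝ).symm (Fin.snoc (EuclideanSpace.equiv (Fin n) ℝ x') t)

/-- The first `n` coordinates `x'` of a point `x ∈ ℝ^{n+1}`. -/
def initE {n : ℕ} (x : Eucl (n+1)) : Eucl n :=
  (EuclideanSpace.equiv (Fin n) ℝ).symm (Fin.init (EuclideanSpace.equiv (Fin (n+1)) ℝ x))

/-- The last coordinate of a point `x ∈ ℝ^{n+1}`. -/
def lastE {n : ℕ} (x : Eucl (n+1)) : ℝ := x (Fin.last n)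

/-- Conditions (V1)–(V2) for a visibility function: `u ∈ C¹([0,T))` (with derivative
`u'`), `u(0) = u'(0) = 0`, `0 ≤ u' ≤ 1/2`, and
`γ_u(t) = t⁻¹ sup_{0<s≤t} √(u(s)/s + u'(s))` is summable on `(0,T)`. -/
def VisibilityV12 (u u' : ℝ → ℝ) (T : ℝ) : Prop :=
  0 < T ∧ u 0 = 0 ∧ u' 0 = 0 ∧
  ContinuousOn u (Ico 0 T) ∧ ContinuousOn u' (Ico 0 T) ∧
  (∀ t ∈ Ioo (0:ℝ) T, HasDerivAt u (u' t) t) ∧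
  (∀ t ∈ Ico (0:ℝ) T, 0 ≤ u' t ∧ u' t ≤ 1/2) ∧
  MeasureTheory.IntegrableOn
    (fun t => t⁻¹ * sSup ((fun s => Real.sqrt (u s / s + u' s)) '' Ioc (0:ℝ) t))
    (Ioo (0:ℝ) T) volume

/-- The point `U_t = −u(t)·e_{n+1}` (resp. `V_r = −v(r)·e_{n+1}`). -/
def vertexPt {n : ℕ} (u : ℝ → ℝ) (t : ℝ) : Eucl (n+1) := snocE (0 : Eucl n) (-(u t))

/-- Condition (V3): for all `0 < t < T`, the segment joining `U_t = −u(t)eₙ` with any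
point of `∂Ω ∩ B_t` does not intersect `Ω`. -/
def VisibilityV3 {n : ℕ} (Ω : Set (Eucl (n+1))) (u : ℝ → ℝ) (T : ℝ) : Prop :=
  ∀ t ∈ Ioo (0:ℝ) T, ∀ x ∈ frontier Ω ∩ ball (0 : Eucl (n+1)) t,
    Disjoint (segment ℝ (vertexPt u t) x) Ω

/-- Off-centric condition (V3'): for all `0 < r < R`, any segment joining
`V_r = −v(r)eₙ` with a point of `∂Ω ∩ B_r(V_r)` does not intersect `Ω`. -/
def VisibilityV3' {n : ℕ} (Ω : Set (Eucl (n+1))) (v : ℝ → ℝ) (R : ℝ) : Prop :=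
  ∀ r ∈ Ioo (0:ℝ) R, ∀ x ∈ frontier Ω ∩ ball (vertexPt v r : Eucl (n+1)) r,
    Disjoint (segment ℝ (vertexPt v r) x) Ω

/-- The visibility property at `0` (centered form). -/
def Visibility {n : ℕ} (Ω : Set (Eucl (n+1))) (u u' : ℝ → ℝ) (T : ℝ) : Prop :=
  VisibilityV12 u u' T ∧ VisibilityV3 Ω u T

/-- The visibility property at `0` (off-centric form). -/
def Visibility' {n : ℕ} (Ω : Set (Eucl (n+1))) (v v' : ℝ → ℝ) (R : ℝ) : Prop :=
  VisibilityV12 v v' R ∧ VisibilityV3' Ω v R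

/-- Local graphical representation of `∂Ω` near `0 ∈ ∂Ω` in the cylinder
`B'_ρ × (−3m, 3m)` as the epigraph of `ω`. -/
def GraphRep {n : ℕ} (Ω : Set (Eucl (n+1))) (ω : Eucl n → ℝ) (ρ m : ℝ) : Prop :=
  Ω ∩ {x : Eucl (n+1) | ‖initE x‖ < ρ ∧ |lastE x| < 3*m} =
    {x : Eucl (n+1) | ‖initE x‖ < ρ ∧ ω (initE x) < lastE x ∧ lastE x < 3*m}

open scoped Pointwise

/-! The visibility condition says that the segment from `U_t = -u(t) eₙ` to the graph point
over `b x'` stays below the graph. Reading off its point over `a x'` gives, for `a ≤ b ≤ 2a`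
and a constant `c > |x'| (1 + L)`,
`ω(b x')/b - ω(a x')/a ≤ (1/a - 1/b) u(cb) ≤ 2c ∫_{2ca}^{2cb} γ_u`,
because `u(s)/s ≤ t γ_u(t)` for `s ≤ t`. Hence `s ↦ ω(s x')/s - 2c ∫_0^{2cs} γ_u` is antitone near
`0`, and since `γ_u` is integrable the correction term vanishes: the radial limits `ω₀(x')` exist.
The blow-ups `ω(s ·)/s` are all `L`-Lipschitz, so they converge to the `1`-homogeneous `ω₀`
uniformly on balls, and graphs that are uniformly close have Hausdorff-close epigraphs in every
ball. -/

lemma tendsto_intervalIntegral_nhdsGT_zero {f : ℝ → ℝ} {T : ℝ} (hT : 0 < T)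
    (hf : IntegrableOn f (Ioo 0 T)) : Tendsto (fun x ↦ ∫ τ in 0..x, f τ) (𝓝[>] 0) (𝓝 0) := by
  have hint : IntervalIntegrable f volume 0 T :=
    (intervalIntegrable_iff_integrableOn_Ioo_of_le hT.le).2 hf
  have hcont := intervalIntegral.continuousOn_primitive_interval' hint left_mem_uIcc 0
    left_mem_uIcc
  rw [uIcc_of_le hT.le] at hcont
  simpa using hcont.tendsto.mono_left (nhdsWithin_le_of_mem (Icc_mem_nhdsGT hT))

lemma mul_log_div_le_integral_inv_mul {G : ℝ → ℝ} {a b q : ℝ} (ha : 0 < a) (hab : a ≤ b)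
    (hq : ∀ τ ∈ Icc a b, q ≤ G τ) (hG : IntervalIntegrable (fun τ ↦ τ⁻¹ * G τ) volume a b) :
    q * Real.log (b / a) ≤ ∫ τ in a..b, τ⁻¹ * G τ := by
  have hb : 0 < b := ha.trans_le hab
  have hinv : IntervalIntegrable (fun τ : ℝ ↦ τ⁻¹ * q) volume a b :=
    (intervalIntegral.intervalIntegrable_inv (fun τ hτ ↦ ?_) continuousOn_id).mul_const q
  · calc q * Real.log (b / a) = ∫ τ in a..b, τ⁻¹ * q := by
          rw [intervalIntegral.integral_mul_const, integral_inv_of_pos ha hb, mul_comm]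
      _ ≤ ∫ τ in a..b, τ⁻¹ * G τ := intervalIntegral.integral_mono_on hab hinv hG
          fun τ hτ ↦ mul_le_mul_of_nonneg_left (hq τ hτ) (inv_nonneg.2 (ha.le.trans hτ.1))
  · rw [uIcc_of_le hab] at hτ
    exact (ha.trans_le hτ.1).ne'

lemma antitoneOn_Ioo_of_doubling {h : ℝ → ℝ} {δ : ℝ}
    (hstep : ∀ a b, 0 < a → a ≤ b → b ≤ 2 * a → b < δ → h b ≤ h a) :
    AntitoneOn h (Ioo 0 δ) := by
  intro a ha b hb hab
  obtain ⟨k, hk⟩ := pow_unbounded_of_one_lt (b / a) one_lt_two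
  rw [div_lt_iff₀ ha.1] at hk
  induction k generalizing b with
  | zero => exact hstep a b ha.1 hab (by linarith [pow_zero (2 : ℝ)]) hb.2
  | succ k ih =>
    rcases le_or_gt b (2 * a) with hb2 | hb2
    · exact hstep a b ha.1 hab hb2 hb.2
    · have hmid : b / 2 ∈ Ioo 0 δ := ⟨by linarith [hb.1], by linarith [hb.1, hb.2]⟩
      calc h b ≤ h (b / 2) := hstep (b / 2) b hmid.1 (by linarith [hb.1]) (by linarith) hb.2
        _ ≤ h a := ih hmid (by linarith) (by rw [pow_succ] at hk; linarith)

lemma exists_tendsto_nhdsGT_of_antitoneOn_sub {g J : ℝ → ℝ} {δ K : ℝ} (hδ : 0 < δ)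
    (hanti : AntitoneOn (g - J) (Ioo 0 δ)) (hg : ∀ s ∈ Ioo 0 δ, g s ≤ K)
    (hJ0 : ∀ s ∈ Ioo 0 δ, 0 ≤ J s) (hJ : Tendsto J (𝓝[>] 0) (𝓝 0)) :
    ∃ l, Tendsto g (𝓝[>] 0) (𝓝 l) := by
  have hbdd : BddAbove ((g - J) '' Ioo 0 δ) := by
    refine ⟨K, ?_⟩
    rintro _ ⟨s, hs, rfl⟩
    linarith [hg s hs, hJ0 s hs, Pi.sub_apply g J s]
  have := (hanti.tendsto_nhdsWithin_Ioo_right ⟨δ / 2, by positivity, by linarith⟩ hbdd).add hJ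
  exact ⟨_, by simpa using this⟩

lemma tendstoUniformlyOn_of_lipschitzWith {ι X Y : Type*} [PseudoMetricSpace X]
    [PseudoMetricSpace Y] {F : ι → X → Y} {f : X → Y} {L : ℝ≥0} {l : Filter ι}
    (hF : ∀ i, LipschitzWith L (F i)) (h : ∀ x, Tendsto (fun i ↦ F i x) l (𝓝 (f x)))
    {K : Set X} (hK : IsCompact K) : TendstoUniformlyOn F f l K := by
  have hF' : Equicontinuous F :=
    Metric.equicontinuous_of_continuity_modulus (fun r ↦ L * r)
      (by simpa using (continuous_const_mul (L : ℝ)).tendsto 0) F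
      fun x y i ↦ (hF i).dist_le_mul x y
  have := (EquicontinuousOn.tendsto_uniformOnFun_iff_pi (𝔖 := {K | IsCompact K}) (fun _ h ↦ h)
    (sUnion_eq_univ_iff.2 fun x ↦ ⟨{x}, isCompact_singleton, rfl⟩)
    (fun K _ ↦ hF'.equicontinuousOn K) l f).2 (tendsto_pi_nhds.2 h)
  exact UniformOnFun.tendsto_iff_tendstoUniformlyOn.1 this K hK

section Coordinates

variable {n : ℕ}

@[simp] lemma initE_snocE (x : Eucl n) (t : ℝ) : initE (snocE x t) = x := by
  ext i; simp [initE, snocE]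
  exact congrFun (Fin.init_snoc (α := fun _ ↦ ℝ) t x.ofLp) i

@[simp] lemma lastE_snocE (x : Eucl n) (t : ℝ) : lastE (snocE x t) = t := by
  simp [lastE, snocE]

@[simp] lemma initE_add (x y : Eucl (n+1)) : initE (x + y) = initE x + initE y := by
  ext i; simp [initE, Fin.init]

@[simp] lemma initE_smul (c : ℝ) (x : Eucl (n+1)) : initE (c • x) = c • initE x := by
  ext i; simp [initE, Fin.init]

@[simp] lemma lastE_add (x y : Eucl (n+1)) : lastE (x + y) = lastE x + lastE y := by
  simp [lastE]

@[simp] lemma lastE_smul (c : ℝ) (x : Eucl (n+1)) : lastE (c • x) = c * lastE x := by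
  simp [lastE]

lemma snocE_add (x y : Eucl n) (s t : ℝ) : snocE (x + y) (s + t) = snocE x s + snocE y t := by
  ext i; induction i using Fin.lastCases <;> simp [snocE]

lemma snocE_smul (c : ℝ) (x : Eucl n) (t : ℝ) : snocE (c • x) (c * t) = c • snocE x t := by
  ext i; induction i using Fin.lastCases <;> simp [snocE]

lemma norm_sq_eq_initE_lastE (x : Eucl (n+1)) : ‖x‖ ^ 2 = ‖initE x‖ ^ 2 + lastE x ^ 2 := by
  simp [EuclideanSpace.norm_sq_eq, Fin.sum_univ_castSucc, initE, lastE, Fin.init]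

lemma norm_initE_le (x : Eucl (n+1)) : ‖initE x‖ ≤ ‖x‖ := by
  rw [← sq_le_sq₀ (norm_nonneg _) (norm_nonneg _), norm_sq_eq_initE_lastE]
  nlinarith [sq_nonneg (lastE x)]

lemma abs_lastE_le (x : Eucl (n+1)) : |lastE x| ≤ ‖x‖ := by
  rw [← sq_le_sq₀ (abs_nonneg _) (norm_nonneg _), norm_sq_eq_initE_lastE, sq_abs]
  nlinarith [sq_nonneg ‖initE x‖]

lemma norm_snocE_le (x : Eucl n) (t : ℝ) : ‖snocE x t‖ ≤ ‖x‖ + |t| := by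
  rw [← sq_le_sq₀ (norm_nonneg _) (by positivity), norm_sq_eq_initE_lastE, initE_snocE,
    lastE_snocE]
  nlinarith [norm_nonneg x, abs_nonneg t, sq_abs t]

lemma continuous_initE : Continuous (initE : Eucl (n+1) → Eucl n) := by
  unfold initE; fun_prop

lemma continuous_lastE : Continuous (lastE : Eucl (n+1) → ℝ) := by
  unfold lastE; fun_prop

lemma continuous_snocE (x : Eucl n) : Continuous (snocE x) := by
  unfold snocE; fun_prop

end Coordinates

def strictEpigraph {n : ℕ} (φ : Eucl n → ℝ) : Set (Eucl (n+1)) := {x | φ (initE x) < lastE x}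

def blowup {E : Type*} [SMul ℝ E] (ω : E → ℝ) (s : ℝ) (z : E) : ℝ := ω (s • z) / s

section Epigraph

variable {n : ℕ}

lemma smul_strictEpigraph {ψ : Eucl n → ℝ} (hψ : ∀ c : ℝ, 0 < c → ∀ z, ψ (c • z) = c * ψ z)
    {c : ℝ} (hc : 0 < c) : c • strictEpigraph ψ = strictEpigraph ψ := by
  ext x
  rw [mem_smul_set_iff_inv_smul_mem₀ hc.ne']
  simp only [strictEpigraph, mem_ofPred_eq, initE_smul, lastE_smul, hψ _ (inv_pos.2 hc)]
  exact mul_lt_mul_iff_right₀ (inv_pos.2 hc)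

lemma exists_mem_strictEpigraph_dist_le {g₁ g₂ : Eucl n → ℝ} {R δ η : ℝ} (hη0 : 0 ≤ η)
    (hη1 : η < 1) (hηR : η * R = 2 * δ)
    (h : ∀ z, ‖z‖ < R → g₂ ((1 - η) • z) ≤ (1 - η) * g₁ z + 2 * δ)
    {x : Eucl (n+1)} (hx : x ∈ strictEpigraph g₁ ∩ ball 0 R) :
    ∃ y ∈ strictEpigraph g₂ ∩ ball 0 R, dist x y ≤ 4 * δ := by
  obtain ⟨hx, hxR⟩ := hx
  rw [mem_ball_zero_iff] at hxR
  have hδ : 0 ≤ δ := by nlinarith [norm_nonneg x]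
  have he : ‖snocE (0 : Eucl n) (2 * δ)‖ ≤ 2 * δ := by
    simpa [abs_of_nonneg hδ] using norm_snocE_le (0 : Eucl n) (2 * δ)
  refine ⟨(1 - η) • x + snocE 0 (2 * δ), ⟨?_, ?_⟩, ?_⟩
  · have hx : g₁ (initE x) < lastE x := hx
    have := h _ ((norm_initE_le x).trans_lt hxR)
    show g₂ (initE _) < lastE _
    simp only [initE_add, initE_smul, initE_snocE, add_zero, lastE_add, lastE_smul, lastE_snocE]
    nlinarith
  · rw [mem_ball_zero_iff]
    calc ‖(1 - η) • x + snocE 0 (2 * δ)‖ ≤ (1 - η) * ‖x‖ + 2 * δ := by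
          refine (norm_add_le _ _).trans (add_le_add ?_ he)
          rw [norm_smul, Real.norm_of_nonneg (by linarith)]
      _ < R := by nlinarith
  · calc dist x ((1 - η) • x + snocE 0 (2 * δ)) = ‖η • x - snocE 0 (2 * δ)‖ := by
          rw [dist_eq_norm, sub_smul, one_smul]; congr 1; abel
      _ ≤ η * ‖x‖ + 2 * δ := by
          refine (norm_sub_le _ _).trans (add_le_add ?_ he)
          rw [norm_smul, Real.norm_of_nonneg hη0]
      _ ≤ 4 * δ := by nlinarith

lemma hausdorffDist_strictEpigraph_le {φ ψ : Eucl n → ℝ}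
    (hψ : ∀ c : ℝ, 0 < c → ∀ z, ψ (c • z) = c * ψ z) {R δ : ℝ} (hδ : 0 ≤ δ) (hδR : 2 * δ < R)
    (hclose : ∀ z, ‖z‖ < R → |φ z - ψ z| ≤ δ) :
    hausdorffDist (strictEpigraph φ ∩ ball 0 R) (strictEpigraph ψ ∩ ball 0 R) ≤ 4 * δ := by
  have hR : 0 < R := by linarith
  set η := 2 * δ / R
  have hη0 : 0 ≤ η := by positivity
  have hη1 : η < 1 := (div_lt_one hR).2 hδR
  have hηR : η * R = 2 * δ := div_mul_cancel₀ _ hR.ne'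
  refine hausdorffDist_le_of_mem_dist (by positivity)
    (fun x hx ↦ exists_mem_strictEpigraph_dist_le hη0 hη1 hηR (fun z hz ↦ ?_) hx)
    (fun x hx ↦ exists_mem_strictEpigraph_dist_le hη0 hη1 hηR (fun z hz ↦ ?_) hx)
  · have := (abs_le.1 (hclose z hz)).1
    rw [hψ _ (by linarith)]
    nlinarith [mul_nonneg (sub_nonneg.2 hη1.le) (by linarith : 0 ≤ φ z - ψ z + δ)]
  · have hz' : ‖(1 - η) • z‖ < R := by
      rw [norm_smul, Real.norm_of_nonneg (by linarith)]
      nlinarith [norm_nonneg z]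
    have := (abs_le.1 (hclose _ hz')).2
    rw [hψ _ (by linarith)] at this
    linarith

lemma tendsto_hausdorffDist_strictEpigraph {ι : Type*} {l : Filter ι} {φ : ι → Eucl n → ℝ}
    {ψ : Eucl n → ℝ} (hψ : ∀ c : ℝ, 0 < c → ∀ z, ψ (c • z) = c * ψ z) {R : ℝ} (hR : 0 < R)
    (h : TendstoUniformlyOn φ ψ l (ball 0 R)) :
    Tendsto (fun i ↦ hausdorffDist (strictEpigraph (φ i) ∩ ball 0 R)
      (strictEpigraph ψ ∩ ball 0 R)) l (𝓝 0) := by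
  rw [Metric.tendstoUniformlyOn_iff] at h
  refine tendsto_order.2 ⟨fun a ha ↦ .of_forall fun i ↦ ha.trans_le hausdorffDist_nonneg,
    fun ε hε ↦ ?_⟩
  set δ := min (ε / 8) (R / 4)
  have hδ : 0 < δ := lt_min (by positivity) (by positivity)
  filter_upwards [h δ hδ] with i hi
  calc _ ≤ 4 * δ := hausdorffDist_strictEpigraph_le hψ hδ.le
          (by linarith [min_le_right (ε / 8) (R / 4)])
          fun z hz ↦ by
            rw [abs_sub_comm, ← Real.dist_eq]
            exact (hi z (mem_ball_zero_iff.2 hz)).le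
    _ < ε := by linarith [min_le_left (ε / 8) (R / 4)]

end Epigraph

section Blowup

variable {E : Type*} [SeminormedAddCommGroup E] [NormedSpace ℝ E] {ω : E → ℝ} {L : ℝ≥0}

lemma lipschitzWith_blowup (h : LipschitzWith L ω) (s : ℝ) : LipschitzWith L (blowup ω s) := by
  refine LipschitzWith.of_dist_le_mul fun x y ↦ ?_
  rcases eq_or_ne s 0 with rfl | hs
  · simp only [blowup, div_zero, dist_self]; positivity
  rw [blowup, blowup, Real.dist_eq, ← sub_div, abs_div, div_le_iff₀ (abs_pos.2 hs)]
  calc |ω (s • x) - ω (s • y)| ≤ L * dist (s • x) (s • y) := by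
        simpa [Real.dist_eq] using h.dist_le_mul (s • x) (s • y)
    _ = L * dist x y * |s| := by rw [dist_smul₀, Real.norm_eq_abs]; ring

lemma abs_blowup_le (h : LipschitzWith L ω) (hω0 : ω 0 = 0) (s : ℝ) (z : E) :
    |blowup ω s z| ≤ L * ‖z‖ := by
  simpa [blowup, hω0, Real.dist_eq, abs_div] using (lipschitzWith_blowup h s).dist_le_mul z 0

lemma blowup_smul (ω : E → ℝ) (s : ℝ) {c : ℝ} (hc : c ≠ 0) (z : E) :
    blowup ω s (c • z) = c * blowup ω (c * s) z := by
  rcases eq_or_ne s 0 with rfl | hs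
  · simp [blowup]
  rw [blowup, blowup, smul_smul, mul_comm s c]
  field_simp

lemma homogeneous_of_tendsto_blowup {ω₀ : E → ℝ}
    (h : ∀ z, Tendsto (fun s ↦ blowup ω s z) (𝓝[>] 0) (𝓝 (ω₀ z))) {c : ℝ} (hc : 0 < c) (z : E) :
    ω₀ (c • z) = c * ω₀ z := by
  have hcs : Tendsto (c * ·) (𝓝[>] (0 : ℝ)) (𝓝[>] 0) :=
    tendsto_iff_comap.2 (comap_mulLeft_nhdsGT_zero hc).ge
  refine tendsto_nhds_unique (h (c • z)) ?_
  simpa only [blowup_smul ω _ hc.ne', Function.comp_def] using ((h z).comp hcs).const_mul c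

end Blowup

section Graph

variable {n : ℕ} {Ω : Set (Eucl (n+1))} {ω : Eucl n → ℝ} {ρ m : ℝ}

lemma GraphRep.mem_iff (hrep : GraphRep Ω ω ρ m) {x : Eucl (n+1)} (hx : ‖initE x‖ < ρ)
    (hx' : |lastE x| < 3 * m) : x ∈ Ω ↔ ω (initE x) < lastE x := by
  have := Set.ext_iff.1 hrep x
  simp only [mem_inter_iff, mem_ofPred_eq, hx, hx', and_true, true_and] at this
  rw [this, and_iff_left_iff_imp]
  exact fun _ ↦ (le_abs_self _).trans_lt hx'

lemma GraphRep.snocE_mem_frontier (hrep : GraphRep Ω ω ρ m) (hΩ : IsOpen Ω) {y : Eucl n}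
    (hy : ‖y‖ < ρ) (hωy : |ω y| < m) : snocE y (ω y) ∈ frontier Ω := by
  have hm : 0 < m := (abs_nonneg _).trans_lt hωy
  have hcyl : ∀ ε, 0 ≤ ε → ε < m → |lastE (snocE y (ω y + ε))| < 3 * m := fun ε h0 h1 ↦ by
    rw [lastE_snocE]
    rw [abs_lt] at hωy ⊢
    constructor <;> linarith
  refine ⟨?_, ?_⟩
  · have hlim : Tendsto (fun ε ↦ snocE y (ω y + ε)) (𝓝[>] 0) (𝓝 (snocE y (ω y))) :=
      ((continuous_snocE y).comp (continuous_const_add _)).tendsto' 0 _ (by simp)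
        |>.mono_left nhdsWithin_le_nhds
    refine mem_closure_of_tendsto hlim ?_
    filter_upwards [Ioo_mem_nhdsGT hm] with ε hε
    rw [hrep.mem_iff (by simpa) (hcyl ε hε.1.le hε.2)]
    simpa using hε.1
  · rw [hΩ.interior_eq, hrep.mem_iff (by simpa) (by simpa using hcyl 0 le_rfl hm)]
    simp

lemma GraphRep.inv_smul_inter_ball (hrep : GraphRep Ω ω ρ m) {s R : ℝ} (hs : 0 < s)
    (hsρ : s * R ≤ ρ) (hsm : s * R ≤ 3 * m) :
    s⁻¹ • Ω ∩ ball 0 R = strictEpigraph (blowup ω s) ∩ ball 0 R := by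
  ext x
  simp only [mem_inter_iff, mem_ball_zero_iff]
  refine and_congr_left fun hx ↦ ?_
  have hsx : s * ‖x‖ < s * R := mul_lt_mul_of_pos_left hx hs
  have hinit : ‖initE (s • x)‖ < ρ := by
    rw [initE_smul, norm_smul, Real.norm_of_nonneg hs.le]
    nlinarith [norm_initE_le x]
  have hlast : |lastE (s • x)| < 3 * m := by
    rw [lastE_smul, abs_mul, abs_of_pos hs]
    nlinarith [abs_lastE_le x]
  rw [mem_inv_smul_set_iff₀ hs.ne', hrep.mem_iff hinit hlast, initE_smul, lastE_smul,
    strictEpigraph, mem_ofPred_eq, blowup, div_lt_iff₀ hs, mul_comm]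

end Graph

section VisibilityFunction

variable {u u' : ℝ → ℝ} {T : ℝ}

lemma VisibilityV12.nonneg_and_le_half (h : VisibilityV12 u u' T) {t : ℝ} (ht : t ∈ Ico 0 T) :
    0 ≤ u t ∧ u t ≤ t / 2 := by
  obtain ⟨-, hu0, -, hcu, -, hderiv, hbd, -⟩ := h
  have mono_of_deriv_nonneg {f f' : ℝ → ℝ} (hf : ContinuousOn f (Ico 0 T))
      (hf' : ∀ x ∈ Ioo 0 T, HasDerivAt f (f' x) x) (hf'₀ : ∀ x ∈ Ioo 0 T, 0 ≤ f' x) :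
      f 0 ≤ f t :=
    monotoneOn_of_hasDerivWithinAt_nonneg (convex_Ico 0 T) hf
      (by simpa using fun x hx ↦ (hf' x hx).hasDerivWithinAt) (by simpa using hf'₀)
      ⟨le_rfl, ht.1.trans_lt ht.2⟩ ht ht.1
  constructor
  · simpa [hu0] using mono_of_deriv_nonneg hcu hderiv
      fun x hx ↦ (hbd x (Ioo_subset_Ico_self hx)).1
  · have := mono_of_deriv_nonneg (f := fun x ↦ x / 2 - u x) (f' := fun x ↦ 1 / 2 - u' x)
      ((continuousOn_id.div_const 2).sub hcu)
      (fun x hx ↦ ((hasDerivAt_id x).div_const 2).sub (hderiv x hx))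
      fun x hx ↦ sub_nonneg.2 (hbd x (Ioo_subset_Ico_self hx)).2
    simp only [hu0] at this
    linarith

-- `t γ_u(t)`, with `γ_u` as in (V2).
def visibilitySup (u u' : ℝ → ℝ) (t : ℝ) : ℝ := sSup ((fun s ↦ √(u s / s + u' s)) '' Ioc 0 t)

lemma visibilitySup_nonneg (t : ℝ) : 0 ≤ visibilitySup u u' t :=
  Real.sSup_nonneg (by rintro _ ⟨s, -, rfl⟩; positivity)

lemma VisibilityV12.div_le_visibilitySup (h : VisibilityV12 u u' T) {s t : ℝ} (hs : 0 < s)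
    (hst : s ≤ t) (ht : t < T) : u s / s ≤ visibilitySup u u' t := by
  have hu := @h.nonneg_and_le_half
  obtain ⟨-, -, -, -, -, -, hu', -⟩ := h
  have bounds : ∀ r ∈ Ioc 0 t, 0 ≤ u r / r ∧ u r / r ≤ 1 / 2 ∧ 0 ≤ u' r ∧ u' r ≤ 1 / 2 := by
    intro r hr
    have hrT : r ∈ Ico 0 T := ⟨hr.1.le, hr.2.trans_lt ht⟩
    obtain ⟨hu0, hu1⟩ := hu hrT
    exact ⟨div_nonneg hu0 hr.1.le, by rw [div_le_iff₀ hr.1]; linarith, hu' r hrT⟩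
  have hbdd : BddAbove ((fun r ↦ √(u r / r + u' r)) '' Ioc 0 t) := by
    refine ⟨1, ?_⟩
    rintro _ ⟨r, hr, rfl⟩
    obtain ⟨-, h1, -, h2⟩ := bounds r hr
    exact Real.sqrt_le_one.2 (by linarith)
  obtain ⟨h0, h1, h2, -⟩ := bounds s ⟨hs, hst⟩
  calc u s / s ≤ √(u s / s) := Real.le_sqrt_self_iff.2 (by linarith)
    _ ≤ √(u s / s + u' s) := Real.sqrt_le_sqrt (by linarith)
    _ ≤ visibilitySup u u' t := le_csSup hbdd ⟨s, ⟨hs, hst⟩, rfl⟩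

end VisibilityFunction

section Radial

variable {n : ℕ} {Ω : Set (Eucl (n+1))} {ω : Eucl n → ℝ} {ρ m T : ℝ} {u u' : ℝ → ℝ}
  {L : ℝ≥0}

lemma VisibilityV3.segment_le_graph (hV3 : VisibilityV3 Ω u T) (hrep : GraphRep Ω ω ρ m)
    (hΩ : IsOpen Ω) {t : ℝ} (ht : t ∈ Ioo 0 T) {y : Eucl n} (hy : ‖y‖ < ρ) (hωy : |ω y| < m)
    (hyt : ‖snocE y (ω y)‖ < t) {l : ℝ} (hl0 : 0 ≤ l) (hl1 : l ≤ 1)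
    (hcyl : |l * ω y - (1 - l) * u t| < 3 * m) :
    l * ω y - (1 - l) * u t ≤ ω (l • y) := by
  set z := snocE (l • y) (l * ω y - (1 - l) * u t)
  have hz : z ∈ segment ℝ (vertexPt u t) (snocE y (ω y)) := by
    refine ⟨1 - l, l, by linarith, hl0, by ring, ?_⟩
    rw [vertexPt, ← snocE_smul, ← snocE_smul, ← snocE_add, smul_zero, zero_add]
    congr 1
    ring
  have hzΩ : z ∉ Ω := Set.disjoint_left.1
    (hV3 t ht _ ⟨hrep.snocE_mem_frontier hΩ hy hωy, mem_ball_zero_iff.2 hyt⟩) hz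
  have hly : ‖l • y‖ < ρ := by
    rw [norm_smul, Real.norm_of_nonneg hl0]
    nlinarith [norm_nonneg y]
  rw [hrep.mem_iff (by simpa [z] using hly) (by simpa [z] using hcyl)] at hzΩ
  simpa [z] using hzΩ

lemma VisibilityV3.blowup_sub_le (hV3 : VisibilityV3 Ω u T) (hrep : GraphRep Ω ω ρ m)
    (hΩ : IsOpen Ω) (hωLip : LipschitzWith L ω) (hω0 : ω 0 = 0)
    (hu : ∀ t ∈ Ico 0 T, 0 ≤ u t ∧ u t ≤ t / 2) {x' : Eucl n} {c a b : ℝ}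
    (hc : ‖x'‖ * (L + 1) < c) (ha : 0 < a) (hab : a ≤ b) (hbρ : b * ‖x'‖ < ρ)
    (hbT : c * b < T) (hbm : c * b < m) :
    blowup ω b x' - blowup ω a x' ≤ (1 / a - 1 / b) * u (c * b) := by
  have hb : 0 < b := ha.trans_le hab
  have hc0 : 0 < c := lt_of_le_of_lt (by positivity) hc
  have hωb : |ω (b • x')| ≤ L * (b * ‖x'‖) := by
    simpa [hω0, norm_smul, abs_of_pos hb] using hωLip.dist_le_mul (b • x') 0
  have hbc : b * ‖x'‖ * (L + 1) < c * b := by nlinarith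
  obtain ⟨hu0, hu1⟩ := hu (c * b) ⟨by positivity, hbT⟩
  have hl0 : 0 ≤ a / b := by positivity
  have hl1 : a / b ≤ 1 := (div_le_one hb).2 hab
  have hyt : ‖snocE (b • x') (ω (b • x'))‖ < c * b := by
    refine (norm_snocE_le _ _).trans_lt ?_
    rw [norm_smul, Real.norm_of_nonneg hb.le]
    nlinarith
  have hW : |ω (b • x')| ≤ c * b := hωb.trans (by nlinarith [norm_nonneg x'])
  have hcyl : |a / b * ω (b • x') - (1 - a / b) * u (c * b)| < 3 * m :=
    calc |a / b * ω (b • x') - (1 - a / b) * u (c * b)|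
        ≤ |a / b * ω (b • x')| + |(1 - a / b) * u (c * b)| := abs_sub _ _
      _ ≤ 1 * (c * b) + 1 * (c * b) := by
        rw [abs_mul, abs_mul, abs_of_nonneg hl0, abs_of_nonneg (sub_nonneg.2 hl1),
          abs_of_nonneg hu0]
        gcongr <;> linarith
      _ < 3 * m := by linarith
  have key := hV3.segment_le_graph hrep hΩ ⟨by positivity, hbT⟩
    (by rwa [norm_smul, Real.norm_of_nonneg hb.le]) (by linarith) hyt hl0 hl1 hcyl
  rw [smul_smul, div_mul_cancel₀ _ hb.ne'] at key
  rw [blowup, blowup, ← sub_nonneg]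
  have hrw : (1 / a - 1 / b) * u (c * b) - (ω (b • x') / b - ω (a • x') / a) =
      (ω (a • x') - (a / b * ω (b • x') - (1 - a / b) * u (c * b))) / a := by
    field_simp
    ring
  rw [hrw]
  exact div_nonneg (by linarith) ha.le

lemma VisibilityV12.intervalIntegrable (h : VisibilityV12 u u' T) {a b : ℝ} (ha : 0 ≤ a)
    (hab : a ≤ b) (hb : b < T) :
    IntervalIntegrable (fun τ ↦ τ⁻¹ * visibilitySup u u' τ) volume a b := by
  obtain ⟨-, -, -, -, -, -, -, hint⟩ := h
  exact (intervalIntegrable_iff_integrableOn_Ioc_of_le hab).2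
    (hint.mono_set fun _ hτ ↦ ⟨ha.trans_lt hτ.1, hτ.2.trans_lt hb⟩)

lemma Visibility.blowup_sub_le_integral (hvis : Visibility Ω u u' T) (hrep : GraphRep Ω ω ρ m)
    (hΩ : IsOpen Ω) (hωLip : LipschitzWith L ω) (hω0 : ω 0 = 0) {x' : Eucl n} {c a b : ℝ}
    (hc : ‖x'‖ * (L + 1) < c) (ha : 0 < a) (hab : a ≤ b) (hb2a : b ≤ 2 * a)
    (hbρ : b * ‖x'‖ < ρ) (hbT : 2 * c * b < T) (hbm : c * b < m) :
    blowup ω b x' - blowup ω a x' ≤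
      2 * c * ∫ τ in (2 * c * a)..(2 * c * b), τ⁻¹ * visibilitySup u u' τ := by
  obtain ⟨hV12, hV3⟩ := hvis
  have hb : 0 < b := ha.trans_le hab
  have hc0 : 0 < c := lt_of_le_of_lt (by positivity) hc
  have hcb : 0 < c * b := by positivity
  set q := u (c * b) / (c * b)
  have hq : 0 ≤ q := div_nonneg (hV12.nonneg_and_le_half ⟨hcb.le, by linarith⟩).1 hcb.le
  have hlog : q * Real.log (b / a) ≤
      ∫ τ in (2 * c * a)..(2 * c * b), τ⁻¹ * visibilitySup u u' τ := by
    have := mul_log_div_le_integral_inv_mul (a := 2 * c * a) (b := 2 * c * b) (by positivity)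
      (by gcongr)
      (fun τ hτ ↦ hV12.div_le_visibilitySup hcb (by nlinarith [hτ.1]) (hτ.2.trans_lt hbT))
      (hV12.intervalIntegrable (by positivity) (by gcongr) hbT)
    rwa [mul_div_mul_left _ _ (by positivity)] at this
  have hlog' : (b - a) / b ≤ Real.log (b / a) := by
    simpa [inv_div, one_sub_div hb.ne'] using Real.one_sub_inv_le_log_of_pos (div_pos hb ha)
  calc blowup ω b x' - blowup ω a x' ≤ (1 / a - 1 / b) * u (c * b) :=
        hV3.blowup_sub_le hrep hΩ hωLip hω0 (fun t ht ↦ hV12.nonneg_and_le_half ht) hc ha hab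
          hbρ (by linarith) hbm
    _ = c * q * ((b - a) / a) := by simp only [q]; field_simp
    _ ≤ c * q * ((b - a) / (b / 2)) := by
        gcongr
        linarith
    _ = 2 * c * (q * ((b - a) / b)) := by field_simp
    _ ≤ 2 * c * ∫ τ in (2 * c * a)..(2 * c * b), τ⁻¹ * visibilitySup u u' τ := by
        gcongr
        exact (mul_le_mul_of_nonneg_left hlog' hq).trans hlog

theorem Visibility.exists_tendsto_blowup (hvis : Visibility Ω u u' T)
    (hrep : GraphRep Ω ω ρ m) (hΩ : IsOpen Ω) (hρ : 0 < ρ) (hm : 0 < m)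
    (hωLip : LipschitzWith L ω) (hω0 : ω 0 = 0) (x' : Eucl n) :
    ∃ l, Tendsto (fun s ↦ blowup ω s x') (𝓝[>] 0) (𝓝 l) := by
  obtain ⟨hT, -, -, -, -, -, -, hint⟩ := hvis.1
  set c := ‖x'‖ * (L + 1) + 1
  have hc0 : 0 < c := by positivity
  set I : ℝ → ℝ := fun s ↦ ∫ τ in 0..s, τ⁻¹ * visibilitySup u u' τ
  set δ := min (ρ / (‖x'‖ + 1)) (min T m / (2 * c))
  have hδ : 0 < δ := lt_min (by positivity) (div_pos (lt_min hT hm) (by positivity))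
  have small : ∀ b, 0 < b → b < δ → b * ‖x'‖ < ρ ∧ 2 * c * b < T ∧ c * b < m := by
    intro b hb hbδ
    have h1 : b * (‖x'‖ + 1) < ρ :=
      (lt_div_iff₀ (by positivity)).1 (hbδ.trans_le (min_le_left _ _))
    have h2 : b * (2 * c) < min T m :=
      (lt_div_iff₀ (by positivity)).1 (hbδ.trans_le (min_le_right _ _))
    exact ⟨by nlinarith, by nlinarith [min_le_left T m], by nlinarith [min_le_right T m]⟩
  have hanti : AntitoneOn ((fun s ↦ blowup ω s x') - fun s ↦ 2 * c * I (2 * c * s))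
      (Ioo 0 δ) := by
    refine antitoneOn_Ioo_of_doubling fun a b ha hab hb2a hbδ ↦ ?_
    have hb : 0 < b := ha.trans_le hab
    obtain ⟨h1, h2, h3⟩ := small b hb hbδ
    have hIab : I (2 * c * b) - I (2 * c * a) =
        ∫ τ in (2 * c * a)..(2 * c * b), τ⁻¹ * visibilitySup u u' τ :=
      intervalIntegral.integral_interval_sub_left
        (hvis.1.intervalIntegrable le_rfl (by positivity) h2)
        (hvis.1.intervalIntegrable le_rfl (by positivity) (by nlinarith))
    have := hvis.blowup_sub_le_integral hrep hΩ hωLip hω0 (lt_add_one _) ha hab hb2a h1 h2 h3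
    rw [← hIab] at this
    simp only [Pi.sub_apply]
    linarith
  refine exists_tendsto_nhdsGT_of_antitoneOn_sub hδ hanti
    (fun s _ ↦ (le_abs_self _).trans (abs_blowup_le hωLip hω0 s x'))
    (fun s hs ↦ mul_nonneg (by positivity) <| intervalIntegral.integral_nonneg
      (by nlinarith [hs.1]) fun τ hτ ↦ mul_nonneg (inv_nonneg.2 hτ.1) (visibilitySup_nonneg τ))
    ?_
  have hscale : Tendsto (2 * c * ·) (𝓝[>] (0 : ℝ)) (𝓝[>] 0) :=
    tendsto_iff_comap.2 (comap_mulLeft_nhdsGT_zero (by positivity)).ge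
  simpa [I, visibilitySup] using
    ((tendsto_intervalIntegral_nhdsGT_zero hT hint).comp hscale).const_mul (2 * c)

end Radial

theorem tangent_cone_exists_general {n : ℕ}
    (Ω : Set (Eucl (n+1))) (hΩ : IsOpen Ω)
    (ρ m : ℝ) (hρ : 0 < ρ) (hm : 0 < m)
    (ω : Eucl n → ℝ) (L : ℝ≥0) (hωLip : LipschitzWith L ω) (hω0 : ω 0 = 0)
    (hrep : GraphRep Ω ω ρ m)
    (T : ℝ) (u u' : ℝ → ℝ) (hvis : Visibility Ω u u' T) :
    ∃ ω₀ : Eucl n → ℝ,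
      (∀ x' : Eucl n, Tendsto (fun s : ℝ => ω (s • x') / s) (𝓝[>] (0:ℝ)) (𝓝 (ω₀ x'))) ∧
      IsOpen {x : Eucl (n+1) | ω₀ (initE x) < lastE x} ∧
      (∀ c : ℝ, 0 < c →
        c • {x : Eucl (n+1) | ω₀ (initE x) < lastE x} =
          {x : Eucl (n+1) | ω₀ (initE x) < lastE x}) ∧
      ∀ R : ℝ, 0 < R →
        Tendsto (fun s : ℝ =>
            Metric.hausdorffDist ((s⁻¹ • Ω) ∩ ball (0 : Eucl (n+1)) R)
              ({x : Eucl (n+1) | ω₀ (initE x) < lastE x} ∩ ball (0 : Eucl (n+1)) R))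
          (𝓝[>] (0:ℝ)) (𝓝 0) := by
  choose ω₀ hω₀ using hvis.exists_tendsto_blowup hrep hΩ hρ hm hωLip hω0
  have hhom : ∀ c : ℝ, 0 < c → ∀ z, ω₀ (c • z) = c * ω₀ z :=
    fun _ hc ↦ homogeneous_of_tendsto_blowup hω₀ hc
  have hLip : LipschitzWith L ω₀ := (isClosed_setOfPred_lipschitzWith L).mem_of_tendsto
    (tendsto_pi_nhds.2 hω₀) (.of_forall (lipschitzWith_blowup hωLip))
  refine ⟨ω₀, hω₀, isOpen_lt (hLip.continuous.comp continuous_initE) continuous_lastE,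
    fun c hc ↦ smul_strictEpigraph hhom hc, fun R hR ↦ ?_⟩
  have hunif : TendstoUniformlyOn (blowup ω) ω₀ (𝓝[>] 0) (ball 0 R) :=
    (tendstoUniformlyOn_of_lipschitzWith (lipschitzWith_blowup hωLip) hω₀
      (isCompact_closedBall 0 R)).mono ball_subset_closedBall
  refine (tendsto_hausdorffDist_strictEpigraph hhom hR hunif).congr' ?_
  have hpos : 0 < min (ρ / R) (3 * m / R) := lt_min (by positivity) (by positivity)
  filter_upwards [Ioo_mem_nhdsGT hpos] with s ⟨hs, hsR⟩
  rw [lt_min_iff, lt_div_iff₀ hR, lt_div_iff₀ hR] at hsR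
  rw [hrep.inv_smul_inter_ball hs hsR.1.le hsR.2.le]
  rfl

/-- existence of the tangent cone. If `Ω` satisfies the visibility
property at `0 ∈ ∂Ω` (being locally the epigraph of a Lipschitz `ω` with `ω(0)=0`),
then the one-sided radial derivatives `D⁺_ν ω(0) = lim_{s→0⁺} ω(sν)/s` exist, and,
`Ω₀` being the open cone given by the epigraph of the associated `1`-homogeneous
function `ω₀`, one has `dist_H(s⁻¹Ω ∩ B_R, Ω₀ ∩ B_R) → 0` as `s → 0⁺`, for all `R > 0`. -/
theorem tangent_cone_exists {n : ℕ}
    (Ω : Set (Eucl (n+1))) (hΩ : IsOpen Ω) (h0 : (0 : Eucl (n+1)) ∈ frontier Ω)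
    (ρ m : ℝ) (hρ : 0 < ρ) (hm : 0 < m)
    (ω : Eucl n → ℝ) (L : ℝ≥0) (hωLip : LipschitzWith L ω) (hω0 : ω 0 = 0)
    (hωm : ∀ x' : Eucl n, ‖x'‖ < ρ → |ω x'| < m)
    (hrep : GraphRep Ω ω ρ m)
    (T : ℝ) (u u' : ℝ → ℝ) (hvis : Visibility Ω u u' T) :
    ∃ ω₀ : Eucl n → ℝ,
      (∀ x' : Eucl n, Tendsto (fun s : ℝ => ω (s • x') / s) (𝓝[>] (0:ℝ)) (𝓝 (ω₀ x'))) ∧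
      IsOpen {x : Eucl (n+1) | ω₀ (initE x) < lastE x} ∧
      (∀ c : ℝ, 0 < c →
        c • {x : Eucl (n+1) | ω₀ (initE x) < lastE x} =
          {x : Eucl (n+1) | ω₀ (initE x) < lastE x}) ∧
      ∀ R : ℝ, 0 < R →
        Tendsto (fun s : ℝ =>
            Metric.hausdorffDist ((s⁻¹ • Ω) ∩ ball (0 : Eucl (n+1)) R)
              ({x : Eucl (n+1) | ω₀ (initE x) < lastE x} ∩ ball (0 : Eucl (n+1)) R))
          (𝓝[>] (0:ℝ)) (𝓝 0) :=
  tangent_cone_exists_general Ω hΩ ρ m hρ hm ω L hωLip hω0 hrep T u u' hvis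
end
end

section
/- Let Ω ⊂ ℝⁿ be open with Lipschitz boundary, 0 ∈ ∂Ω, locally the epigraph of a Lipschitz ω with ω(0)=0. The following are equivalent: (i) Ω satisfies the visibility property at 0 (conditions (V1), (V2), (V3) with centered balls B_t and points U_t = −u(t)e_n); (ii) there exist R > 0 and v ∈ C¹((0,R)) satisfying (V1), (V2), and the off-centric condition (V3'): for all 0 < r < R, any segment joining V_r = −v(r)e_n with a point of ∂Ω ∩ B_r(V_r) does not intersect Ω. -/
open MeasureTheory Metric Set Filter
open scoped Topology ENNReal NNReal RealInnerProductSpace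

noncomputable section

/-!
Replacing `u` by `t ↦ u (2t)` turns either form of the visibility property into the other.
Since `u(0) = 0` and `0 ≤ u' ≤ 1/2`, the vertex satisfies `|U_{2r}| = u(2r) ≤ r`, so
`B_r(U_{2r}) ⊆ B_{2r}` and `B_r ⊆ B_{2r}(U_{2r})`: (V3) for `u` at radius `2r` gives (V3') for
`u(2·)` at radius `r`, and conversely. The rescaled function still satisfies (V1)–(V2) on a
shorter interval: its derivative `2u'(2t)` stays below `1/2` near `0` because `u'` is continuous
with `u'(0) = 0`, and its `γ` is `2√2 γ_u(2t)`.
-/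

lemma norm_vertexPt {n : ℕ} (u : ℝ → ℝ) (t : ℝ) :
    ‖(vertexPt u t : Eucl (n+1))‖ = |u t| := by
  rw [vertexPt, EuclideanSpace.norm_eq, Fin.sum_univ_castSucc]
  simp [snocE, Real.sqrt_sq_eq_abs]

lemma MeasureTheory.IntegrableOn.comp_mul_left_Ioo {f : ℝ → ℝ} {T c : ℝ}
    (hf : IntegrableOn f (Ioo 0 T)) (hc : 0 < c) :
    IntegrableOn (fun t => f (c * t)) (Ioo 0 (T / c)) := by
  have hind := ((integrable_indicator_iff measurableSet_Ioo).2 hf).comp_mul_left' hc.ne'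
  refine hind.integrableOn.congr_fun (fun t ht => ?_) measurableSet_Ioo
  have hct : c * t ∈ Ioo 0 T := ⟨mul_pos hc ht.1, (lt_div_iff₀' hc).1 ht.2⟩
  simp only [indicator_of_mem hct]

lemma monotoneOn_Ico_of_hasDerivAt_nonneg {f f' : ℝ → ℝ} {T : ℝ}
    (hf : ContinuousOn f (Ico 0 T)) (hf' : ∀ t ∈ Ioo 0 T, HasDerivAt f (f' t) t)
    (hf'₀ : ∀ t ∈ Ioo 0 T, 0 ≤ f' t) :
    MonotoneOn f (Ico 0 T) := by
  refine monotoneOn_of_hasDerivWithinAt_nonneg (f' := f') (convex_Ico 0 T) hf ?_ ?_ <;>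
    rw [interior_Ico]
  · exact fun t ht => (hf' t ht).hasDerivWithinAt
  · exact hf'₀

namespace VisibilityV12

variable {u u' : ℝ → ℝ} {T : ℝ}

lemma abs_le (h : VisibilityV12 u u' T) : ∀ t ∈ Ico 0 T, |u t| ≤ t / 2 := by
  obtain ⟨-, hu0, -, hu, -, hderiv, hbnd, -⟩ := h
  have hmono : MonotoneOn u (Ico 0 T) :=
    monotoneOn_Ico_of_hasDerivAt_nonneg hu hderiv fun t ht => (hbnd t (Ioo_subset_Ico_self ht)).1
  have hmono' : MonotoneOn (fun t => t / 2 - u t) (Ico 0 T) :=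
    monotoneOn_Ico_of_hasDerivAt_nonneg ((continuousOn_id.div_const 2).sub hu)
      (fun t ht => ((hasDerivAt_id t).div_const 2).sub (hderiv t ht))
      fun t ht => by linarith [(hbnd t (Ioo_subset_Ico_self ht)).2]
  intro t ht
  have h0 : (0 : ℝ) ∈ Ico 0 T := ⟨le_rfl, ht.1.trans_lt ht.2⟩
  have hpos := hmono h0 ht ht.1
  have hhalf := hmono' h0 ht ht.1
  simp only [hu0] at hpos hhalf
  rw [abs_of_nonneg hpos]
  linarith

lemma mono (h : VisibilityV12 u u' T) {T' : ℝ} (hT' : 0 < T') (hle : T' ≤ T) :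
    VisibilityV12 u u' T' := by
  obtain ⟨-, hu0, hu'0, hu, hu', hderiv, hbnd, hint⟩ := h
  have hIco : Ico 0 T' ⊆ Ico 0 T := Ico_subset_Ico_right hle
  have hIoo : Ioo 0 T' ⊆ Ioo 0 T := Ioo_subset_Ioo_right hle
  exact ⟨hT', hu0, hu'0, hu.mono hIco, hu'.mono hIco, fun t ht => hderiv t (hIoo ht),
    fun t ht => hbnd t (hIco ht), hint.mono_set hIoo⟩

lemma exists_deriv_le (h : VisibilityV12 u u' T) {ε : ℝ} (hε : 0 < ε) :
    ∃ T' ∈ Ioc 0 T, ∀ t ∈ Ico 0 T', u' t ≤ ε := by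
  obtain ⟨hT, -, hu'0, -, hu', -⟩ := h
  have hnhds : u' ⁻¹' Iic ε ∈ 𝓝[Ico 0 T] 0 :=
    hu' 0 ⟨le_rfl, hT⟩ (Iic_mem_nhds (by rwa [hu'0]))
  obtain ⟨δ, hδ, hball⟩ := Metric.mem_nhdsWithin_iff.1 hnhds
  refine ⟨min δ T, ⟨lt_min hδ hT, min_le_right δ T⟩, fun t ht => hball ⟨?_, ?_⟩⟩
  · rw [mem_ball, Real.dist_eq, sub_zero, abs_of_nonneg ht.1]
    exact ht.2.trans_le (min_le_left δ T)
  · exact ⟨ht.1, ht.2.trans_le (min_le_right δ T)⟩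

open scoped Pointwise in
lemma sSup_image_comp_const_mul {c : ℝ} (hc : 0 < c) (t : ℝ) :
    sSup ((fun s => √(u (c * s) / s + c * u' (c * s))) '' Ioc 0 t) =
      √c * sSup ((fun s => √(u s / s + u' s)) '' Ioc 0 (c * t)) := by
  have himg : (fun s => √(u (c * s) / s + c * u' (c * s))) '' Ioc 0 t =
      √c • ((fun s => √(u s / s + u' s)) '' Ioc 0 (c * t)) := by
    have hIoc : Ioc 0 (c * t) = (c * ·) '' Ioc 0 t := by rw [image_mul_left_Ioc hc, mul_zero]
    rw [hIoc, ← image_smul, image_image, image_image]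
    refine image_congr fun s hs => ?_
    rw [smul_eq_mul, ← Real.sqrt_mul hc.le]
    congr 1
    field_simp [hs.1.ne']
  rw [himg, Real.sSup_smul_of_nonneg (Real.sqrt_nonneg c), smul_eq_mul]

lemma comp_const_mul (h : VisibilityV12 u u' T) {c : ℝ} (hc : 0 < c)
    (hcu' : ∀ t ∈ Ico 0 T, c * u' t ≤ 1 / 2) :
    VisibilityV12 (fun t => u (c * t)) (fun t => c * u' (c * t)) (T / c) := by
  obtain ⟨hT, hu0, hu'0, hu, hu', hderiv, hbnd, hint⟩ := h
  have hIco : MapsTo (c * ·) (Ico 0 (T / c)) (Ico 0 T) := fun t ht =>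
    ⟨mul_nonneg hc.le ht.1, (lt_div_iff₀' hc).1 ht.2⟩
  have hIoo : MapsTo (c * ·) (Ioo 0 (T / c)) (Ioo 0 T) := fun t ht =>
    ⟨mul_pos hc ht.1, (lt_div_iff₀' hc).1 ht.2⟩
  have hcont : ContinuousOn (c * ·) (Ico 0 (T / c)) := (continuous_const_mul c).continuousOn
  refine ⟨div_pos hT hc, by simpa using hu0, by simp [hu'0], hu.comp hcont hIco,
    continuousOn_const.mul (hu'.comp hcont hIco), fun t ht => ?_, fun t ht => ?_, ?_⟩
  · simpa [mul_comm, Function.comp_def] using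
      (hderiv _ (hIoo ht)).comp t ((hasDerivAt_id t).const_mul c)
  · exact ⟨mul_nonneg hc.le (hbnd _ (hIco ht)).1, hcu' _ (hIco ht)⟩
  · refine IntegrableOn.congr_fun ((hint.comp_mul_left_Ioo hc).const_mul (c * √c))
      (fun t _ => ?_) measurableSet_Ioo
    simp only [sSup_image_comp_const_mul hc, mul_inv]
    field_simp

lemma exists_comp_two_mul (h : VisibilityV12 u u' T) :
    ∃ T', 2 * T' ≤ T ∧ VisibilityV12 (fun t => u (2 * t)) (fun t => 2 * u' (2 * t)) T' := by
  obtain ⟨T₁, ⟨hT₁, hle⟩, hsmall⟩ := h.exists_deriv_le (by norm_num : (0 : ℝ) < 1 / 4)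
  refine ⟨T₁ / 2, by linarith, (h.mono hT₁ hle).comp_const_mul two_pos fun t ht => ?_⟩
  linarith [hsmall t ht]

end VisibilityV12

section VisibleSegments

variable {n : ℕ} {Ω : Set (Eucl (n+1))} {u : ℝ → ℝ} {T T' : ℝ}

lemma VisibilityV3.offcentric_comp_two_mul (h3 : VisibilityV3 Ω u T)
    (hu : ∀ t ∈ Ico 0 T, |u t| ≤ t / 2) (hT' : 2 * T' ≤ T) :
    VisibilityV3' Ω (fun t => u (2 * t)) T' := by
  intro r hr x hx
  have h2r : 2 * r ∈ Ioo 0 T := ⟨by linarith [hr.1], by linarith [hr.2]⟩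
  have hball : ball (vertexPt u (2 * r) : Eucl (n+1)) r ⊆ ball 0 (2 * r) := by
    refine ball_subset_ball' ?_
    rw [dist_zero_right, norm_vertexPt]
    linarith [hu _ (Ioo_subset_Ico_self h2r)]
  exact h3 (2 * r) h2r x ⟨hx.1, hball hx.2⟩

lemma VisibilityV3'.centered_comp_two_mul (h3 : VisibilityV3' Ω u T)
    (hu : ∀ t ∈ Ico 0 T, |u t| ≤ t / 2) (hT' : 2 * T' ≤ T) :
    VisibilityV3 Ω (fun t => u (2 * t)) T' := by
  intro r hr x hx
  have h2r : 2 * r ∈ Ioo 0 T := ⟨by linarith [hr.1], by linarith [hr.2]⟩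
  have hball : ball (0 : Eucl (n+1)) r ⊆ ball (vertexPt u (2 * r)) (2 * r) := by
    refine ball_subset_ball' ?_
    rw [dist_zero_left, norm_vertexPt]
    linarith [hu _ (Ioo_subset_Ico_self h2r)]
  exact h3 (2 * r) h2r x ⟨hx.1, hball hx.2⟩

end VisibleSegments

theorem visibility_iff_offcentric_general {n : ℕ}
    (Ω : Set (Eucl (n+1))) :
    (∃ (T : ℝ) (u u' : ℝ → ℝ), Visibility Ω u u' T) ↔
      (∃ (R : ℝ) (v v' : ℝ → ℝ), Visibility' Ω v v' R) := by
  constructor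
  · rintro ⟨T, u, u', h12, h3⟩
    obtain ⟨T', hT', h12'⟩ := h12.exists_comp_two_mul
    exact ⟨T', _, _, h12', h3.offcentric_comp_two_mul h12.abs_le hT'⟩
  · rintro ⟨R, v, v', h12, h3⟩
    obtain ⟨R', hR', h12'⟩ := h12.exists_comp_two_mul
    exact ⟨R', _, _, h12', h3.centered_comp_two_mul h12.abs_le hR'⟩

/-- The centered and off-centric forms of the visibility property at
`0 ∈ ∂Ω` are equivalent. -/
theorem visibility_iff_offcentric {n : ℕ}
    (Ω : Set (Eucl (n+1))) (hΩ : IsOpen Ω) (h0 : (0 : Eucl (n+1)) ∈ frontier Ω)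
    (ρ m : ℝ) (hρ : 0 < ρ) (hm : 0 < m)
    (ω : Eucl n → ℝ) (L : ℝ≥0) (hωLip : LipschitzWith L ω) (hω0 : ω 0 = 0)
    (hωm : ∀ x' : Eucl n, ‖x'‖ < ρ → |ω x'| < m)
    (hrep : GraphRep Ω ω ρ m) :
    (∃ (T : ℝ) (u u' : ℝ → ℝ), Visibility Ω u u' T) ↔
      (∃ (R : ℝ) (v v' : ℝ → ℝ), Visibility' Ω v v' R) :=
  visibility_iff_offcentric_general Ω
end
end
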